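/- For any modal formula A: GL proves □A → (□^{s+1}⊥ → □^s⊥) implies GL proves □A → □^{s+1}⊥, hence GL proves ◇^{s+1}⊤ → ¬□A. -/
import Mathlib


/-- Modal propositional formulas (variables are indexed by `ℕ`). -/
inductive MF : Type
  | var : ℕ → MF
  | fal : MF
  | imp : MF → MF → MF
  | box : MF → MF
deriving DecidableEq

namespace MF

def neg (A : MF) : MF := imp A fal
def top : MF := neg fal
def conj (A B : MF) : MF := neg (imp A (neg B))
def disj (A B : MF) : MF := imp (neg A) B
def biimp (A B : MF) : MF := conj (imp A B) (imp B A)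
def dia (A : MF) : MF := neg (box (neg A))
def boxn : ℕ → MF → MF
  | 0, A => A
  | n+1, A => box (boxn n A)
def dian (n : ℕ) (A : MF) : MF := neg (boxn n (neg A))

/-- Uniform substitution. -/
def subst (s : ℕ → MF) : MF → MF
  | var n => s n
  | fal => fal
  | imp A B => imp (subst s A) (subst s B)
  | box A => box (subst s A)

/-- The set of subformulas. -/
def subF : MF → Finset MF
  | var n => {var n}
  | fal => {fal}
  | imp A B => insert (imp A B) (subF A ∪ subF B)
  | box A => insert (box A) (subF A)

def isBox : MF → Bool
  | box _ => true
  | _ => false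

def unbox : MF → MF
  | box A => A
  | A => A

/-- `cx A` is the number of subformulas of `A` of the form `□C`. -/
def cx (A : MF) : ℕ := ((subF A).filter (fun B => isBox B = true)).card

/-- `Rf(A) = {□B → B : □B ∈ Sub(A)}`. -/
def RfSet (A : MF) : Finset MF :=
  ((subF A).filter (fun B => isBox B = true)).image (fun B => imp B (unbox B))

/-- Conjunction of a finite set of formulas. -/
noncomputable def conjFin (s : Finset MF) : MF := s.toList.foldr conj top

/-- `A` is an instance of a propositional tautology. -/
def TautInst (A : MF) : Prop :=
  ∀ v : MF → Bool, (∀ B C, v (imp B C) = (!(v B) || v C)) → v fal = false → v A = true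

end MF

/-- Provability in the Gödel–Löb logic GL. -/
inductive GLPrv : MF → Prop
  | taut {A} : MF.TautInst A → GLPrv A
  | k (A B : MF) : GLPrv (MF.imp (MF.box (MF.imp A B)) (MF.imp (MF.box A) (MF.box B)))
  | lob (A : MF) : GLPrv (MF.imp (MF.box (MF.imp (MF.box A) A)) (MF.box A))
  | mp {A B} : GLPrv (MF.imp A B) → GLPrv A → GLPrv B
  | nec {A} : GLPrv A → GLPrv (MF.box A)

/-- Provability in GL + Γ: axioms are GL-theorems and substitution instances of
formulas in Γ; rules are modus ponens (and substitution, built into the axiom rule). -/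
inductive ExtPrv (Ax : Set MF) : MF → Prop
  | gl {A} : GLPrv A → ExtPrv Ax A
  | ax {A} (s : ℕ → MF) : A ∈ Ax → ExtPrv Ax (A.subst s)
  | mp {A B} : ExtPrv Ax (MF.imp A B) → ExtPrv Ax A → ExtPrv Ax B

/-- GL_ω = GL + {◇ⁿ⊤ : n ∈ ω}. -/
def GLomegaPrv : MF → Prop := ExtPrv (Set.range fun n => MF.dian n MF.top)

/-- GLS = GL + {□p → p}. -/
def GLSPrv : MF → Prop := ExtPrv {MF.imp (MF.box (MF.var 0)) (MF.var 0)}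

/-- F_s = □^{s+1}⊥ → □^s⊥. -/
def Fmla (s : ℕ) : MF := MF.imp (MF.boxn (s+1) MF.fal) (MF.boxn s MF.fal)

/-- GL + {¬F_s}. -/
def GLFPrv (s : ℕ) : MF → Prop := ExtPrv {MF.neg (Fmla s)}


namespace MF

lemma taut_trans (A B C : MF) : TautInst ((A.imp B).imp ((B.imp C).imp (A.imp C))) := by
  intro v hv hf
  simp only [hv]
  cases v A <;> cases v B <;> cases v C <;> rfl

lemma taut_contra (A B : MF) : TautInst ((A.imp B).imp ((B.neg).imp A.neg)) := by
  intro v hv hf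
  simp only [hv, neg, hf]
  cases v A <;> cases v B <;> rfl

lemma GL_trans {A B C : MF} (h1 : GLPrv (A.imp B)) (h2 : GLPrv (B.imp C)) :
    GLPrv (A.imp C) :=
  ((GLPrv.taut (taut_trans A B C)).mp h1).mp h2

lemma GL_contra {A B : MF} (h : GLPrv (A.imp B)) : GLPrv ((B.neg).imp A.neg) :=
  (GLPrv.taut (taut_contra A B)).mp h

lemma GL_boxMono {A B : MF} (h : GLPrv (A.imp B)) : GLPrv ((A.box).imp B.box) :=
  (GLPrv.k A B).mp (GLPrv.nec h)

lemma GL_boxnMono {A B : MF} (n : ℕ) (h : GLPrv (A.imp B)) :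
    GLPrv ((boxn n A).imp (boxn n B)) := by
  induction n with
  | zero => exact h
  | succ n ih => exact GL_boxMono ih

lemma GL_four (A : MF) : GLPrv ((A.box).imp A.box.box) := by
  set C := conj A A.box with hC
  have hCA : GLPrv (C.imp A) := by
    apply GLPrv.taut
    intro v hv hf
    simp only [hC, conj, neg, hv, hf]
    cases v A <;> cases v A.box <;> rfl
  have hCbA : GLPrv (C.imp A.box) := by
    apply GLPrv.taut
    intro v hv hf
    simp only [hC, conj, neg, hv, hf]
    cases v A <;> cases v A.box <;> rfl
  have hbCbA : GLPrv ((C.box).imp A.box) := GL_boxMono hCA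
  have h1 : GLPrv (A.imp ((C.box).imp C)) := by
    refine GLPrv.mp (GLPrv.taut ?_) hbCbA
    intro v hv hf
    simp only [hC, conj, neg, hv, hf]
    cases v A <;> cases v A.box <;> cases v ((A.imp (A.box.imp fal)).imp fal).box <;> rfl
  have h2 : GLPrv ((A.box).imp ((C.box.imp C).box)) := GL_boxMono h1
  have h3 : GLPrv ((A.box).imp C.box) := GL_trans h2 (GLPrv.lob C)
  exact GL_trans h3 (GL_boxMono hCbA)

end MF

/-- if GL ⊢ □A → (□^{s+1}⊥ → □^s⊥) then GL ⊢ □A → □^{s+1}⊥,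
hence GL ⊢ ◇^{s+1}⊤ → ¬□A. -/
theorem box_to_Fs (A : MF) (s : ℕ)
    (h : GLPrv (MF.imp (MF.box A) (Fmla s))) :
    GLPrv (MF.imp (MF.box A) (MF.boxn (s+1) MF.fal)) ∧
    GLPrv (MF.imp (MF.dian (s+1) MF.top) (MF.neg (MF.box A))) := by
  have h1 : GLPrv ((A.box.box).imp ((Fmla s).box)) := MF.GL_boxMono h
  have hlob : GLPrv (((Fmla s).box).imp (MF.boxn (s+1) MF.fal)) := GLPrv.lob (MF.boxn s MF.fal)
  have hmain : GLPrv ((A.box).imp (MF.boxn (s+1) MF.fal)) :=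
    MF.GL_trans (MF.GL_four A) (MF.GL_trans h1 hlob)
  refine ⟨hmain, ?_⟩
  have hft : GLPrv (MF.fal.imp MF.top.neg) := by
    apply GLPrv.taut
    intro v hv hf
    simp only [MF.neg, MF.top, hv, hf]; rfl
  have h2 : GLPrv ((A.box).imp (MF.boxn (s+1) MF.top.neg)) :=
    MF.GL_trans hmain (MF.GL_boxnMono (s+1) hft)
  exact MF.GL_contra h2
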